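/- arXiv:0711.1036 — 3 statements merged into one kernel-verified Lean document; each statement's English description precedes it below -/
import Mathlib

section
/- Let C_n = [θ̂_n - a_n, θ̂_n + b_n] ⊂ ℝ be an interval with nonnegative constants a_n, b_n centered at the hard-thresholding estimator θ̂_n = ȳ·1(|ȳ| > η_n), where ȳ is the mean of n i.i.d. N(θ,1) observations and η_n > 0. If η_n > a_n + b_n, then the infimal coverage probability inf_{θ∈ℝ} P_{n,θ}(θ ∈ C_n) equals 0. -/
open MeasureTheory ProbabilityTheory Filter

/-- Joint law of `n` i.i.d. `N(θ,1)` observations. -/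
noncomputable def Pnθ (n : ℕ) (θ : ℝ) : Measure (Fin n → ℝ) :=
  Measure.pi fun _ => gaussianReal θ 1

/-- Sample mean. -/
noncomputable def ybar (n : ℕ) (ω : Fin n → ℝ) : ℝ := (∑ i, ω i) / n

/-- Hard-thresholding estimator `θ̂ = ȳ·1(|ȳ| > η)`. -/
noncomputable def hatθ (n : ℕ) (η : ℝ) (ω : Fin n → ℝ) : ℝ :=
  if η < |ybar n ω| then ybar n ω else 0

/-- If `η_n > a_n + b_n`, the infimal coverage probability of
`[θ̂_n - a_n, θ̂_n + b_n]` is zero. -/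
theorem stmt0 (n : ℕ) (hn : 1 ≤ n) (η a b : ℝ) (hη : 0 < η) (ha : 0 ≤ a) (hb : 0 ≤ b)
    (h : a + b < η) :
    ⨅ θ : ℝ,
      ((Pnθ n θ) {ω | hatθ n η ω - a ≤ θ ∧ θ ≤ hatθ n η ω + b}).toReal = 0 := by
  set θ0 : ℝ := (η - a + b) / 2 with hθ0
  have key : ∀ θ : ℝ,
      0 ≤ ((Pnθ n θ) {ω | hatθ n η ω - a ≤ θ ∧ θ ≤ hatθ n η ω + b}).toReal :=
    fun θ => ENNReal.toReal_nonneg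
  have hempty : {ω : Fin n → ℝ | hatθ n η ω - a ≤ θ0 ∧ θ0 ≤ hatθ n η ω + b} = ∅ := by
    rw [Set.eq_empty_iff_forall_notMem]
    rintro ω ⟨h1, h2⟩
    unfold hatθ at h1 h2
    split_ifs at h1 h2 with hc
    · have habs : |ybar n ω| < η := by
        rw [abs_lt]
        constructor <;> linarith
      linarith
    · linarith
  have hzero : ((Pnθ n θ0) {ω | hatθ n η ω - a ≤ θ0 ∧ θ0 ≤ hatθ n η ω + b}).toReal = 0 := by
    rw [hempty]
    simp
  refine le_antisymm ?_ (Real.iInf_nonneg key)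
  have hle := ciInf_le (f := fun θ : ℝ =>
    ((Pnθ n θ) {ω | hatθ n η ω - a ≤ θ ∧ θ ≤ hatθ n η ω + b}).toReal)
    ⟨0, by rintro x ⟨θ, rfl⟩; exact key θ⟩ θ0
  exact hzero ▸ hle
end

section
/- In the hard-thresholding setting with n i.i.d. N(θ,1) observations, if η_n ≤ a_n + b_n and a_n ≥ b_n, then inf_{θ∈ℝ} P_{n,θ}(θ ∈ [θ̂_n - a_n, θ̂_n + b_n]) = Φ(n^{1/2} a_n) - Φ(n^{1/2}(η_n - b_n)). -/
open MeasureTheory ProbabilityTheory Filter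

/-- Standard normal cumulative distribution function. -/
noncomputable def Phi (x : ℝ) : ℝ := (gaussianReal 0 1 (Set.Iic x)).toReal

/-! Put `z = √n (ȳ - θ) ∼ N(0,1)` and scale everything by `√n`: `t = √n θ`, `A = √n a`,
`B = √n b`, `H = √n η`. The interval covers `θ` iff either `|z + t| > H` and `z ∈ [-B, A]`, or
`|z + t| ≤ H` and `t ∈ [-A, B]`. For `t ∈ [-A, B]` the coverage is at least `Φ(A) - Φ(-B)`, for
`t > B` it is at least the mass of `(max (H - t) (-B), A]`, and for `t < -A` at least the mass of
`(-B, min A (-H - t))`; the last is compared with `Φ(A) - Φ(H - B)` using that the standard normal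
mass of an interval of fixed length decreases as its centre moves away from `0`. Conversely, for
`t ↓ B` the coverage is at most `Φ(A) - Φ(H - t) → Φ(A) - Φ(H - B)`. -/

open Real Set Topology
open scoped NNReal

theorem gaussianReal_map_sum_pi {ι : Type*} [Fintype ι] (μ : ℝ) (v : ℝ≥0) :
    (Measure.pi fun _ : ι => gaussianReal μ v).map (fun p => ∑ i, p i) =
      gaussianReal (Fintype.card ι * μ) (Fintype.card ι * v) := by
  refine Measure.ext_of_charFun (funext fun t => ?_)
  rw [charFun_map_sum_pi_eq_prod, Finset.prod_const, Finset.card_univ, Pi.pow_apply,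
    charFun_gaussianReal, charFun_gaussianReal, ← Complex.exp_nat_mul]
  push_cast
  ring_nf

theorem gaussianReal_map_sub_div_sqrt (μ : ℝ) {v : ℝ≥0} (hv : v ≠ 0) :
    (gaussianReal μ v).map (fun x => (x - μ) / √v) = gaussianReal 0 1 := by
  have hv' : (0 : ℝ) < v := by positivity
  rw [show (fun x => (x - μ) / √v) = (· / √v) ∘ (· - μ) from rfl,
    ← Measure.map_map (by fun_prop) (by fun_prop), gaussianReal_map_sub_const,
    gaussianReal_map_div_const, sub_self, zero_div]
  congr 1
  ext
  simp [Real.sq_sqrt hv'.le, hv'.ne']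

theorem measurable_ybar (n : ℕ) : Measurable (ybar n) := by
  unfold ybar; fun_prop

theorem Pnθ_map_sqrt_mul_ybar_sub {n : ℕ} (hn : n ≠ 0) (θ : ℝ) :
    (Pnθ n θ).map (fun ω => √n * (ybar n ω - θ)) = gaussianReal 0 1 := by
  have hn' : (0 : ℝ) < n := by positivity
  have hstd : (fun ω : Fin n → ℝ => √n * (ybar n ω - θ)) =
      (fun x => (x - n * θ) / √(n : ℝ≥0)) ∘ fun ω => ∑ i, ω i := by
    funext ω
    simp only [ybar, Function.comp_apply, NNReal.coe_natCast]
    field_simp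
    rw [Real.sq_sqrt hn'.le]
  rw [hstd, ← Measure.map_map (by fun_prop) (by fun_prop), Pnθ, gaussianReal_map_sum_pi]
  simpa using gaussianReal_map_sub_div_sqrt (n * θ) (v := n) (by exact_mod_cast hn)

instance : NullSingletonClass (gaussianReal 0 1) := nullSingletonClass_gaussianReal one_ne_zero

theorem measureReal_Ioc_eq_Phi_sub {x y : ℝ} (h : x ≤ y) :
    (gaussianReal 0 1).real (Ioc x y) = Phi y - Phi x := by
  rw [← Iic_sdiff_Iic, measureReal_sdiff (Iic_subset_Iic.2 h) measurableSet_Iic]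
  rfl

theorem measureReal_Ioo_eq_Phi_sub {x y : ℝ} (h : x ≤ y) :
    (gaussianReal 0 1).real (Ioo x y) = Phi y - Phi x := by
  rw [measureReal_congr Ioo_ae_eq_Ioc, measureReal_Ioc_eq_Phi_sub h]

theorem monotone_Phi : Monotone Phi :=
  fun _ _ h => measureReal_mono (Iic_subset_Iic.2 h)

theorem Phi_neg (x : ℝ) : Phi (-x) = 1 - Phi x := by
  have hIic : gaussianReal 0 1 (Iic (-x)) = gaussianReal 0 1 (Ici x) := by
    conv_lhs => rw [← neg_zero, ← gaussianReal_map_neg]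
    rw [Measure.map_apply measurable_neg measurableSet_Iic, neg_preimage, neg_Iic, neg_neg]
  change (gaussianReal 0 1).real (Iic (-x)) = 1 - (gaussianReal 0 1).real (Iic x)
  rw [measureReal_def, hIic, ← measureReal_def, ← compl_Iio,
    probReal_compl_eq_one_sub measurableSet_Iio, measureReal_congr Iio_ae_eq_Iic]

theorem hasDerivAt_Phi (x : ℝ) : HasDerivAt Phi (gaussianPDFReal 0 1 x) x := by
  have hint : ∀ y : ℝ, IntegrableOn (gaussianPDFReal 0 1) (Iic y) :=
    fun _ => (integrable_gaussianPDFReal 0 1).integrableOn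
  have hPhi : ∀ y, Phi y = ∫ t in Iic y, gaussianPDFReal 0 1 t := fun y => by
    rw [Phi, gaussianReal_apply_eq_integral _ one_ne_zero, ENNReal.toReal_ofReal
      (setIntegral_nonneg measurableSet_Iic fun t _ => gaussianPDFReal_nonneg _ _ _)]
  have hFTC : Phi = fun y => Phi 0 + ∫ t in (0 : ℝ)..y, gaussianPDFReal 0 1 t := by
    funext y
    rw [hPhi, hPhi, ← intervalIntegral.integral_Iic_sub_Iic (hint 0) (hint y), add_sub_cancel]
  rw [hFTC]
  refine (intervalIntegral.integral_hasDerivAt_right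
    (integrable_gaussianPDFReal 0 1).intervalIntegrable ?_ ?_).const_add _
  · exact (stronglyMeasurable_gaussianPDFReal 0 1).stronglyMeasurableAtFilter
  · exact (by unfold gaussianPDFReal; fun_prop : Continuous (gaussianPDFReal 0 1)).continuousAt

theorem continuous_Phi : Continuous Phi :=
  continuous_iff_continuousAt.2 fun x => (hasDerivAt_Phi x).continuousAt

theorem gaussianPDFReal_le_of_sq_le {μ : ℝ} {v : ℝ≥0} {x y : ℝ} (h : (y - μ) ^ 2 ≤ (x - μ) ^ 2) :
    gaussianPDFReal μ v x ≤ gaussianPDFReal μ v y := by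
  unfold gaussianPDFReal
  gcongr

theorem antitoneOn_Phi_add_sub_Phi_sub {r : ℝ} (hr : 0 ≤ r) :
    AntitoneOn (fun c => Phi (c + r) - Phi (c - r)) (Ici 0) := by
  have hderiv : ∀ c, HasDerivAt (fun c => Phi (c + r) - Phi (c - r))
      (gaussianPDFReal 0 1 (c + r) - gaussianPDFReal 0 1 (c - r)) c := fun c =>
    ((hasDerivAt_Phi (c + r)).comp_add_const c r).sub
      ((hasDerivAt_Phi (c - r)).comp_sub_const c r)
  refine antitoneOn_of_deriv_nonpos (convex_Ici 0)
    (fun c _ => (hderiv c).continuousAt.continuousWithinAt)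
    (fun c _ => (hderiv c).differentiableAt.differentiableWithinAt) fun c hc => ?_
  rw [interior_Ici, mem_Ioi] at hc
  rw [(hderiv c).deriv, sub_nonpos]
  exact gaussianPDFReal_le_of_sq_le (by nlinarith)

theorem Phi_add_sub_Phi_sub_le_of_abs_le {r c c' : ℝ} (hr : 0 ≤ r) (h : |c| ≤ |c'|) :
    Phi (c' + r) - Phi (c' - r) ≤ Phi (c + r) - Phi (c - r) := by
  have heven : ∀ c, Phi (|c| + r) - Phi (|c| - r) = Phi (c + r) - Phi (c - r) := fun c => by
    rcases abs_cases c with ⟨hc, -⟩ | ⟨hc, -⟩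
    · rw [hc]
    · rw [hc, show -c + r = -(c - r) by ring, show -c - r = -(c + r) by ring, Phi_neg, Phi_neg]
      ring
  rw [← heven c, ← heven c']
  exact antitoneOn_Phi_add_sub_Phi_sub hr (abs_nonneg c) (abs_nonneg c') h

noncomputable def hardThreshold (η x : ℝ) : ℝ := if η < |x| then x else 0

theorem measurable_hardThreshold (η : ℝ) : Measurable (hardThreshold η) :=
  Measurable.ite (measurableSet_lt measurable_const measurable_abs) measurable_id measurable_const

theorem mul_hardThreshold {c : ℝ} (hc : 0 < c) (η x : ℝ) :
    c * hardThreshold η x = hardThreshold (c * η) (c * x) := by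
  simp only [hardThreshold, abs_mul, abs_of_pos hc, mul_lt_mul_iff_right₀ hc]
  split_ifs <;> simp

/-- The event that `[θ̂ - a, θ̂ + b]` covers `θ`, in the coordinates `z = √n (ȳ - θ)`, `t = √n θ`,
`A = √n a`, `B = √n b`, `H = √n η`. -/
def coverageSet (A B H t : ℝ) : Set ℝ :=
  {z | hardThreshold H (z + t) - A ≤ t ∧ t ≤ hardThreshold H (z + t) + B}

theorem measurableSet_coverageSet (A B H t : ℝ) : MeasurableSet (coverageSet A B H t) := by
  have hf : Measurable fun z => hardThreshold H (z + t) :=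
    (measurable_hardThreshold H).comp (measurable_add_const t)
  exact (measurableSet_le (hf.sub_const A) measurable_const).inter
    (measurableSet_le measurable_const (hf.add_const B))

theorem coverage_iff_mem_coverageSet {c : ℝ} (hc : 0 < c) (η a b θ x : ℝ) :
    (hardThreshold η x - a ≤ θ ∧ θ ≤ hardThreshold η x + b) ↔
      c * (x - θ) ∈ coverageSet (c * a) (c * b) (c * η) (c * θ) := by
  rw [coverageSet, mem_ofPred_eq, ← mul_add, sub_add_cancel, ← mul_hardThreshold hc, ← mul_sub,
    ← mul_add, mul_le_mul_iff_right₀ hc, mul_le_mul_iff_right₀ hc]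

theorem mem_coverageSet_iff {A B H t z : ℝ} :
    z ∈ coverageSet A B H t ↔
      (H < |z + t| ∧ -B ≤ z ∧ z ≤ A) ∨ (|z + t| ≤ H ∧ -A ≤ t ∧ t ≤ B) := by
  simp only [coverageSet, mem_ofPred_eq, hardThreshold]
  split_ifs with h
  · have : ¬ |z + t| ≤ H := not_le.2 h
    constructor
    · rintro ⟨h₁, h₂⟩; exact Or.inl ⟨h, by linarith, by linarith⟩
    · rintro (⟨-, h₁, h₂⟩ | ⟨h', -⟩)
      · exact ⟨by linarith, by linarith⟩
      · exact absurd h' this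
  · constructor
    · rintro ⟨h₁, h₂⟩; exact Or.inr ⟨not_lt.1 h, by linarith, by linarith⟩
    · rintro (⟨h', -⟩ | ⟨-, h₁, h₂⟩)
      · exact absurd h' h
      · exact ⟨by linarith, by linarith⟩

section Coverage

variable {A B H : ℝ}

theorem Phi_add_sub_Phi_le {U : ℝ} (hH : 0 ≤ H) (hU : -B ≤ U) (hU' : B - H ≤ U) :
    Phi (U + H) - Phi U ≤ Phi (H - B) - Phi (-B) := by
  have key := Phi_add_sub_Phi_sub_le_of_abs_le (r := H / 2) (c := H / 2 - B) (c' := U + H / 2)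
    (by linarith) (abs_le_abs (by linarith) (by linarith))
  ring_nf at key ⊢
  exact key

theorem Phi_sub_Phi_le_measureReal_coverageSet (hH : 0 < H) (h1 : H ≤ A + B) (h2 : B ≤ A)
    (t : ℝ) : Phi A - Phi (H - B) ≤ (gaussianReal 0 1).real (coverageSet A B H t) := by
  rcases lt_or_ge t (-A) with ht | ht
  · set U := -H - t
    have hsub : Ioo (-B) (min A U) ⊆ coverageSet A B H t := fun z ⟨hz₁, hz₂⟩ => by
      have hzt : z + t < -H := by linarith [min_le_right A U]
      exact mem_coverageSet_iff.2 <| Or.inl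
        ⟨by rw [abs_of_neg (by linarith)]; linarith, hz₁.le, (hz₂.trans_le (min_le_left A U)).le⟩
    calc Phi A - Phi (H - B) ≤ Phi (min A U) - Phi (-B) := by
          rcases le_total A U with hAU | hUA
          · rw [min_eq_left hAU]
            linarith [monotone_Phi (show -B ≤ H - B by linarith)]
          · rw [min_eq_right hUA]
            linarith [monotone_Phi (show A ≤ U + H by linarith),
              Phi_add_sub_Phi_le hH.le (show -B ≤ U by linarith) (show B - H ≤ U by linarith)]
      _ = (gaussianReal 0 1).real (Ioo (-B) (min A U)) :=
          (measureReal_Ioo_eq_Phi_sub (le_min (by linarith) (by linarith))).symm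
      _ ≤ _ := measureReal_mono hsub
  rcases le_or_gt t B with ht' | ht'
  · have hsub : Ioc (-B) A ⊆ coverageSet A B H t := fun z ⟨hz₁, hz₂⟩ => by
      rcases lt_or_ge H |z + t| with h | h
      · exact mem_coverageSet_iff.2 <| Or.inl ⟨h, hz₁.le, hz₂⟩
      · exact mem_coverageSet_iff.2 <| Or.inr ⟨h, ht, ht'⟩
    calc Phi A - Phi (H - B) ≤ Phi A - Phi (-B) := by
          linarith [monotone_Phi (show -B ≤ H - B by linarith)]
      _ = (gaussianReal 0 1).real (Ioc (-B) A) := (measureReal_Ioc_eq_Phi_sub (by linarith)).symm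
      _ ≤ _ := measureReal_mono hsub
  · have hsub : Ioc (max (H - t) (-B)) A ⊆ coverageSet A B H t := fun z ⟨hz₁, hz₂⟩ => by
      have hzt : H < z + t := by linarith [le_max_left (H - t) (-B)]
      exact mem_coverageSet_iff.2 <| Or.inl
        ⟨by rwa [abs_of_pos (hH.trans hzt)], (le_max_right _ _).trans hz₁.le, hz₂⟩
    calc Phi A - Phi (H - B) ≤ Phi A - Phi (max (H - t) (-B)) := by
          linarith [monotone_Phi (show max (H - t) (-B) ≤ H - B from
            max_le (by linarith) (by linarith))]
      _ = (gaussianReal 0 1).real (Ioc (max (H - t) (-B)) A) :=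
          (measureReal_Ioc_eq_Phi_sub (max_le (by linarith) (by linarith))).symm
      _ ≤ _ := measureReal_mono hsub

theorem measureReal_coverageSet_le {t : ℝ} (hH : 0 < H) (h1 : H ≤ A + B) (ht : B < t) :
    (gaussianReal 0 1).real (coverageSet A B H t) ≤ Phi A - Phi (H - t) := by
  have hsub : coverageSet A B H t ⊆ Ioc (H - t) A := fun z hz => by
    rcases mem_coverageSet_iff.1 hz with ⟨h, hz₁, hz₂⟩ | ⟨-, -, htB⟩
    · rcases lt_abs.1 h with h | h
      · exact ⟨by linarith, hz₂⟩
      · linarith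
    · linarith
  calc (gaussianReal 0 1).real (coverageSet A B H t) ≤ (gaussianReal 0 1).real (Ioc (H - t) A) :=
        measureReal_mono hsub
    _ = Phi A - Phi (H - t) := measureReal_Ioc_eq_Phi_sub (by linarith)

theorem iInf_measureReal_coverageSet (hH : 0 < H) (h1 : H ≤ A + B) (h2 : B ≤ A) :
    ⨅ t, (gaussianReal 0 1).real (coverageSet A B H t) = Phi A - Phi (H - B) := by
  refine le_antisymm ?_ (le_ciInf (Phi_sub_Phi_le_measureReal_coverageSet hH h1 h2))
  have hbdd : BddBelow (range fun t => (gaussianReal 0 1).real (coverageSet A B H t)) :=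
    ⟨0, forall_mem_range.2 fun _ => measureReal_nonneg⟩
  have hlim : Tendsto (fun t => Phi A - Phi (H - t)) (𝓝[>] B) (𝓝 (Phi A - Phi (H - B))) :=
    ((continuous_const.sub (continuous_Phi.comp (continuous_sub_left H))).tendsto B).mono_left
      nhdsWithin_le_nhds
  refine ge_of_tendsto hlim (eventually_nhdsWithin_of_forall fun t ht => ?_)
  exact (ciInf_le hbdd t).trans (measureReal_coverageSet_le hH h1 ht)

end Coverage

theorem stmt2_general (n : ℕ) (hn : 1 ≤ n) (η a b : ℝ) (hη : 0 < η)
    (h1 : η ≤ a + b) (h2 : b ≤ a) :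
    ⨅ θ : ℝ,
      ((Pnθ n θ) {ω | hatθ n η ω - a ≤ θ ∧ θ ≤ hatθ n η ω + b}).toReal
      = Phi (Real.sqrt n * a) - Phi (Real.sqrt n * (η - b)) := by
  have hc : 0 < √(n : ℝ) := Real.sqrt_pos.2 (by exact_mod_cast hn)
  have hevent : ∀ θ, ((Pnθ n θ) {ω | hatθ n η ω - a ≤ θ ∧ θ ≤ hatθ n η ω + b}).toReal =
      (gaussianReal 0 1).real (coverageSet (√n * a) (√n * b) (√n * η) (√n * θ)) := fun θ => by
    have hset : {ω | hatθ n η ω - a ≤ θ ∧ θ ≤ hatθ n η ω + b} =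
        (fun ω => √n * (ybar n ω - θ)) ⁻¹' coverageSet (√n * a) (√n * b) (√n * η) (√n * θ) :=
      ext fun ω => coverage_iff_mem_coverageSet hc η a b θ (ybar n ω)
    rw [hset, ← Measure.map_apply (((measurable_ybar n).sub_const θ).const_mul _)
      (measurableSet_coverageSet _ _ _ _), Pnθ_map_sqrt_mul_ybar_sub (by omega)]
    rfl
  calc _ = ⨅ θ, (gaussianReal 0 1).real (coverageSet (√n * a) (√n * b) (√n * η) (√n * θ)) :=
        iInf_congr hevent
    _ = ⨅ t, (gaussianReal 0 1).real (coverageSet (√n * a) (√n * b) (√n * η) t) :=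
        (mul_left_surjective₀ hc.ne').iInf_comp fun t =>
          (gaussianReal 0 1).real (coverageSet (√n * a) (√n * b) (√n * η) t)
    _ = _ := by
      rw [iInf_measureReal_coverageSet (by positivity) (by rw [← mul_add]; gcongr) (by gcongr),
        mul_sub]

/-- If `η_n ≤ a_n + b_n` and `a_n ≥ b_n`, the infimal coverage probability of
`[θ̂_n - a_n, θ̂_n + b_n]` equals `Φ(√n a_n) - Φ(√n (η_n - b_n))`. -/
theorem stmt2 (n : ℕ) (hn : 1 ≤ n) (η a b : ℝ) (hη : 0 < η) (ha : 0 ≤ a) (hb : 0 ≤ b)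
    (h1 : η ≤ a + b) (h2 : b ≤ a) :
    ⨅ θ : ℝ,
      ((Pnθ n θ) {ω | hatθ n η ω - a ≤ θ ∧ θ ≤ hatθ n η ω + b}).toReal
      = Phi (Real.sqrt n * a) - Phi (Real.sqrt n * (η - b)) :=
  stmt2_general n hn η a b hη h1 h2
end

section
/- Let η_n > 0 satisfy η_n → 0 and n^{1/2}η_n → ∞, fix 0 < δ < 1, and suppose a_n ≥ η_n/2 satisfies Φ(n^{1/2}a_n) - Φ(n^{1/2}(η_n - a_n)) = δ for all n. Then n^{1/2}a_n → ∞ and n^{1/2}(η_n - a_n) → Φ^{-1}(1-δ), i.e., a_n = η_n - n^{-1/2}Φ^{-1}(1-δ) + o(n^{-1/2}). -/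
open MeasureTheory ProbabilityTheory Filter

/-!
Since `√n a_n ≥ √n η_n / 2 → ∞`, the term `Φ(√n a_n)` tends to `1`, so the equation forces
`Φ(√n (η_n - a_n)) → 1 - δ = Φ(c)`; as `Φ` is strictly increasing, this pins down
`√n (η_n - a_n) → c`.
-/

lemma ProbabilityTheory.cdf_strictMono_of_absolutelyContinuous {μ : Measure ℝ}
    [IsProbabilityMeasure μ] (hμ : volume ≪ μ) : StrictMono (cdf μ) := by
  intro x y hxy
  have hIoc : μ (Set.Ioc x y) ≠ 0 := fun h0 =>
    hxy.not_ge (by simpa [Real.volume_Ioc] using hμ h0)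
  rw [← measure_cdf μ, StieltjesFunction.measure_Ioc, ne_eq, ENNReal.ofReal_eq_zero,
    not_le, sub_pos] at hIoc
  exact hIoc

lemma StrictMono.tendsto_of_tendsto_apply {α β γ : Type*} [LinearOrder α] [TopologicalSpace α]
    [OrderTopology α] [LinearOrder β] [TopologicalSpace β] [OrderTopology β] {f : α → β}
    (hf : StrictMono f) {l : Filter γ} {u : γ → α} {c : α}
    (hu : Tendsto (fun x => f (u x)) l (nhds (f c))) : Tendsto u l (nhds c) := by
  refine tendsto_order.2 ⟨fun b hb => ?_, fun b hb => ?_⟩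
  · filter_upwards [hu.eventually (eventually_gt_nhds (hf hb))] with x hx
    exact hf.lt_iff_lt.1 hx
  · filter_upwards [hu.eventually (eventually_lt_nhds (hf hb))] with x hx
    exact hf.lt_iff_lt.1 hx

lemma Phi_eq_cdf : Phi = cdf (gaussianReal 0 1) := by
  ext x
  rw [cdf_eq_real]
  rfl

lemma Phi_strictMono : StrictMono Phi :=
  Phi_eq_cdf ▸ cdf_strictMono_of_absolutelyContinuous
    (gaussianReal_absolutelyContinuous' 0 one_ne_zero)

lemma tendsto_Phi_atTop : Tendsto Phi atTop (nhds 1) :=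
  Phi_eq_cdf ▸ tendsto_cdf_atTop _

theorem stmt5_general (η a : ℕ → ℝ) (δ c : ℝ)
    (hηinf : Tendsto (fun n : ℕ => Real.sqrt n * η n) atTop atTop)
    (hhalf : ∀ n, η n / 2 ≤ a n)
    (heq : ∀ n : ℕ, 1 ≤ n → Phi (Real.sqrt n * a n) - Phi (Real.sqrt n * (η n - a n)) = δ)
    (hc : Phi c = 1 - δ) :
    Tendsto (fun n : ℕ => Real.sqrt n * a n) atTop atTop ∧
      Tendsto (fun n : ℕ => Real.sqrt n * (η n - a n)) atTop (nhds c) := by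
  have ha : Tendsto (fun n : ℕ => Real.sqrt n * a n) atTop atTop := by
    refine tendsto_atTop_mono (fun n => ?_) (hηinf.atTop_div_const two_pos)
    rw [mul_div_assoc]
    exact mul_le_mul_of_nonneg_left (hhalf n) (Real.sqrt_nonneg n)
  refine ⟨ha, Phi_strictMono.tendsto_of_tendsto_apply ?_⟩
  have hPhi_eq : (fun n : ℕ => Phi (Real.sqrt n * a n) - δ)
      =ᶠ[atTop] fun n : ℕ => Phi (Real.sqrt n * (η n - a n)) := by
    filter_upwards [eventually_ge_atTop 1] with n hn
    linarith [heq n hn]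
  rw [hc]
  exact ((tendsto_Phi_atTop.comp ha).sub_const δ).congr' hPhi_eq

/-- If `η_n → 0`, `√n η_n → ∞`, `a_n ≥ η_n/2` and
`Φ(√n a_n) - Φ(√n (η_n - a_n)) = δ` with `0 < δ < 1`, then `√n a_n → ∞` and
`√n (η_n - a_n) → Φ⁻¹(1-δ)`, i.e. `a_n = η_n - Φ⁻¹(1-δ)/√n + o(1/√n)`. -/
theorem stmt5 (η a : ℕ → ℝ) (δ c : ℝ) (hδ0 : 0 < δ) (hδ1 : δ < 1)
    (hηpos : ∀ n, 0 < η n) (hη0 : Tendsto η atTop (nhds 0))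
    (hηinf : Tendsto (fun n : ℕ => Real.sqrt n * η n) atTop atTop)
    (hhalf : ∀ n, η n / 2 ≤ a n)
    (heq : ∀ n : ℕ, 1 ≤ n → Phi (Real.sqrt n * a n) - Phi (Real.sqrt n * (η n - a n)) = δ)
    (hc : Phi c = 1 - δ) :
    Tendsto (fun n : ℕ => Real.sqrt n * a n) atTop atTop ∧
      Tendsto (fun n : ℕ => Real.sqrt n * (η n - a n)) atTop (nhds c) :=
  stmt5_general η a δ c hηinf hhalf heq hc
end
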